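/- arXiv:2602.12118 — 11 statements merged into one kernel-verified Lean document; each statement's English description precedes it below -/
import Mathlib

section
/- Let a ≤ b be positive reals with Q = b/a, and let q_1,…,q_n ∈ [a,b] with partial sums F_k. Then ∑_{ℓ=1}^{n} q_ℓ/F_ℓ ≤ min{n, 1 + log(Q·n)}. -/
/-!
Each term satisfies `q ℓ / F ℓ ≤ 1`, giving the bound `n`. For the logarithmic bound, the
inequality `1 - 1/x ≤ log x` applied to `x = F ℓ / F (ℓ - 1)` gives
`q ℓ / F ℓ ≤ log F ℓ - log F (ℓ - 1)` for `ℓ ≥ 2`, so the sum telescopes to at most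
`1 + log (F n / F 1)`, and `F n / F 1 ≤ n b / a = Q n`.
-/

open Finset Real

lemma div_add_le_log_add_sub_log {u x : ℝ} (hu : 0 < u) (hux : 0 < u + x) :
    x / (u + x) ≤ log (u + x) - log u := by
  have h := one_sub_inv_le_log_of_pos (div_pos hux hu)
  rw [log_div hux.ne' hu.ne', inv_div] at h
  calc x / (u + x) = 1 - u / (u + x) := by field_simp; ring
    _ ≤ _ := h

section PartialSums

variable (q : ℕ → ℝ)

lemma sum_div_sum_Icc_le_card {n : ℕ} (hq : ∀ i ∈ Icc 1 n, 0 ≤ q i) :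
    ∑ ℓ ∈ Icc 1 n, q ℓ / ∑ i ∈ Icc 1 ℓ, q i ≤ n := by
  have hterm : ∀ ℓ ∈ Icc 1 n, q ℓ / ∑ i ∈ Icc 1 ℓ, q i ≤ 1 := by
    intro ℓ hℓ
    obtain ⟨hℓ1, hℓn⟩ := mem_Icc.1 hℓ
    have hq' : ∀ i ∈ Icc 1 ℓ, 0 ≤ q i := fun i hi =>
      hq i (Icc_subset_Icc_right hℓn hi)
    exact div_le_one_of_le₀ (single_le_sum hq' (mem_Icc.2 ⟨hℓ1, le_rfl⟩)) (sum_nonneg hq')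
  simpa using sum_le_card_nsmul _ _ _ hterm

lemma sum_div_sum_Icc_le_one_add_log {n : ℕ} (hn : 1 ≤ n) (hq : ∀ i ∈ Icc 1 n, 0 < q i) :
    ∑ ℓ ∈ Icc 1 n, q ℓ / ∑ i ∈ Icc 1 ℓ, q i ≤ 1 + log ((∑ i ∈ Icc 1 n, q i) / q 1) := by
  induction n, hn using Nat.le_induction with
  | base =>
    have hq1 : q 1 ≠ 0 := (hq 1 (by simp)).ne'
    simp [hq1]
  | succ m hm ih =>
    have hq' : ∀ i ∈ Icc 1 m, 0 < q i := fun i hi => hq i (Icc_subset_Icc_right m.le_succ hi)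
    have hq1 : 0 < q 1 := hq' 1 (mem_Icc.2 ⟨le_rfl, hm⟩)
    have hFm : 0 < ∑ i ∈ Icc 1 m, q i := sum_pos hq' (nonempty_Icc.2 hm)
    have hFm' : 0 < ∑ i ∈ Icc 1 m, q i + q (m + 1) := add_pos hFm (hq _ (by simp))
    have hstep := div_add_le_log_add_sub_log hFm hFm'
    have ih := ih hq'
    rw [sum_Icc_succ_top (by omega), sum_Icc_succ_top (by omega)]
    rw [log_div hFm.ne' hq1.ne'] at ih
    rw [log_div hFm'.ne' hq1.ne']
    linarith

end PartialSums

theorem sum_ratio_le_min_general (n : ℕ) (hn : 1 ≤ n) (a b : ℝ)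
    (ha : 0 < a) (Q : ℝ) (hQ : Q = b / a)
    (q : ℕ → ℝ) (hq : ∀ i ∈ Finset.Icc 1 n, q i ∈ Set.Icc a b)
    (F : ℕ → ℝ) (hF : ∀ k, F k = ∑ i ∈ Finset.Icc 1 k, q i) :
    ∑ ℓ ∈ Finset.Icc 1 n, q ℓ / F ℓ ≤ min (n : ℝ) (1 + Real.log (Q * n)) := by
  obtain rfl : F = fun k => ∑ i ∈ Icc 1 k, q i := funext hF
  have hq_pos : ∀ i ∈ Icc 1 n, 0 < q i := fun i hi => ha.trans_le (hq i hi).1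
  have hq1 : a ≤ q 1 := (hq 1 (mem_Icc.2 ⟨le_rfl, hn⟩)).1
  have hFn_pos : 0 < ∑ i ∈ Icc 1 n, q i := sum_pos hq_pos (nonempty_Icc.2 hn)
  have hFn : ∑ i ∈ Icc 1 n, q i ≤ n * b := by
    simpa using sum_le_card_nsmul _ _ _ fun i hi => (hq i hi).2
  have hratio : (∑ i ∈ Icc 1 n, q i) / q 1 ≤ Q * n :=
    calc _ ≤ n * b / a := div_le_div₀ (hFn_pos.le.trans hFn) hFn ha hq1
      _ = Q * n := by rw [hQ]; ring
  refine le_min (sum_div_sum_Icc_le_card q fun i hi => (hq_pos i hi).le) ?_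
  calc _ ≤ 1 + log ((∑ i ∈ Icc 1 n, q i) / q 1) := sum_div_sum_Icc_le_one_add_log q hn hq_pos
    _ ≤ 1 + log (Q * n) := by gcongr; exact div_pos hFn_pos (ha.trans_le hq1)

theorem sum_ratio_le_min (n : ℕ) (hn : 1 ≤ n) (a b : ℝ)
    (ha : 0 < a) (hab : a ≤ b) (hb : b ≤ 1) (Q : ℝ) (hQ : Q = b / a)
    (q : ℕ → ℝ) (hq : ∀ i ∈ Finset.Icc 1 n, q i ∈ Set.Icc a b)
    (F : ℕ → ℝ) (hF : ∀ k, F k = ∑ i ∈ Finset.Icc 1 k, q i) :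
    ∑ ℓ ∈ Finset.Icc 1 n, q ℓ / F ℓ ≤ min (n : ℝ) (1 + Real.log (Q * n)) :=
  sum_ratio_le_min_general n hn a b ha Q hQ q hq F hF
end

section
/- Let q_1,…,q_n be positive reals with partial sums F_0 = 0 and F_k = q_1+⋯+q_k. For any index t with 1 ≤ t ≤ n-1, if q_t < q_{t+1} then q_{t+1}/(F_{t-1}+q_{t+1}) + q_t/F_{t+1} < q_t/F_t + q_{t+1}/F_{t+1}. That is, swapping two adjacent entries into increasing order strictly increases the sum ∑_ℓ q_ℓ/F_ℓ. -/
/-!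
Write `a = F (t - 1)`, `x = q t`, `y = q (t + 1)`. Then
`y / (a + y) - x / (a + x) = a (y - x) / ((a + x) (a + y))`, and since
`a (a + x + y) < (a + x) (a + y)` (the difference is `x y > 0`), this is less than
`(y - x) / (a + x + y)`, which is the claim after rearranging.
-/

lemma div_add_sub_div_add (a x y : ℝ) (hx : a + x ≠ 0) (hy : a + y ≠ 0) :
    y / (a + y) - x / (a + x) = a * (y - x) / ((a + x) * (a + y)) := by
  field_simp
  ring

lemma div_add_div_lt_div_add_div_of_lt {a x y : ℝ} (ha : 0 ≤ a) (hx : 0 < x) (hxy : x < y) :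
    y / (a + y) + x / (a + x + y) < x / (a + x) + y / (a + x + y) := by
  have hax : 0 < a + x := by linarith
  have hay : 0 < a + y := by linarith
  have haxy : 0 < a + x + y := by linarith
  have key : a * (y - x) / ((a + x) * (a + y)) < (y - x) / (a + x + y) := by
    rw [div_lt_div_iff₀ (by positivity) haxy]
    nlinarith [mul_pos hx (hx.trans hxy), sub_pos.mpr hxy]
  have hsub : (y - x) / (a + x + y) = y / (a + x + y) - x / (a + x + y) := sub_div _ _ _
  linarith [div_add_sub_div_add a x y hax.ne' hay.ne']

theorem swap_increases_sum_general (n : ℕ) (q : ℕ → ℝ)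
    (hq : ∀ i ∈ Finset.Icc 1 n, 0 < q i)
    (F : ℕ → ℝ) (hF : ∀ k, F k = ∑ i ∈ Finset.Icc 1 k, q i)
    (t : ℕ) (ht1 : 1 ≤ t) (ht2 : t ≤ n - 1) (hqt : q t < q (t + 1)) :
    q (t + 1) / (F (t - 1) + q (t + 1)) + q t / F (t + 1) <
      q t / F t + q (t + 1) / F (t + 1) := by
  obtain ⟨s, rfl⟩ : ∃ s, t = s + 1 := ⟨t - 1, by omega⟩
  have hq_pos : ∀ i ∈ Finset.Icc 1 (s + 1), 0 < q i := fun i hi =>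
    hq i (Finset.Icc_subset_Icc_right (by omega) hi)
  have hF_nonneg : 0 ≤ F s := by
    rw [hF]
    exact Finset.sum_nonneg fun i hi => (hq_pos i (Finset.Icc_subset_Icc_right (by omega) hi)).le
  have hF_succ (k : ℕ) : F (k + 1) = F k + q (k + 1) := by
    rw [hF, hF, Finset.sum_Icc_succ_top (by omega)]
  rw [Nat.add_sub_cancel, hF_succ (s + 1), hF_succ s]
  exact div_add_div_lt_div_add_div_of_lt hF_nonneg
    (hq_pos (s + 1) (Finset.right_mem_Icc.mpr (by omega))) hqt

theorem swap_increases_sum (n : ℕ) (hn : 2 ≤ n) (q : ℕ → ℝ)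
    (hq : ∀ i ∈ Finset.Icc 1 n, 0 < q i)
    (F : ℕ → ℝ) (hF : ∀ k, F k = ∑ i ∈ Finset.Icc 1 k, q i)
    (t : ℕ) (ht1 : 1 ≤ t) (ht2 : t ≤ n - 1) (hqt : q t < q (t + 1)) :
    q (t + 1) / (F (t - 1) + q (t + 1)) + q t / F (t + 1) <
      q t / F t + q (t + 1) / F (t + 1) :=
  swap_increases_sum_general n q hq F hF t ht1 ht2 hqt
end

section
/- For Q > 1 real and n ≥ 2 integer, setting X = Qn/(2·log(Qn)), the inequality X - X^{(n-2)/(n-1)} < Q holds. -/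
theorem X_sub_rpow_lt (Q : ℝ) (hQ : 1 < Q) (n : ℕ) (hn : 2 ≤ n)
    (X : ℝ) (hX : X = Q * n / (2 * Real.log (Q * n))) :
    X - X ^ (((n : ℝ) - 2) / ((n : ℝ) - 1)) < Q := by
  have hc : (2:ℝ) ≤ (n:ℝ) := by exact_mod_cast hn
  have hQ0 : 0 < Q := by linarith
  have hQn : 2 < Q * n := by nlinarith
  have hlogpos : 0 < Real.log (Q*n) := Real.log_pos (by linarith)
  have hlog1 : 1 < 2 * Real.log (Q*n) := by
    have h2 : Real.log 2 ≤ Real.log (Q*n) := Real.log_le_log (by norm_num) (by linarith)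
    have := Real.log_two_gt_d9
    linarith
  have hXpos : 0 < X := by rw [hX]; positivity
  have hXlt : X < Q*n := by
    rw [hX]; exact div_lt_self (by linarith) hlog1
  have hlogX : Real.log X < Real.log (Q*n) := Real.log_lt_log hXpos hXlt
  set c := (n:ℝ) with hcdef
  have hc1 : (1:ℝ) ≤ c - 1 := by linarith
  have hc1' : c - 1 ≠ 0 := by linarith
  set t : ℝ := (c-2)/(c-1) with htdef
  set u : ℝ := Real.log X / (c-1) with hudef
  have hXt : X * (1 - u) ≤ X ^ t := by
    rw [Real.rpow_def_of_pos hXpos]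
    have ht : Real.log X * t = Real.log X + (-u) := by
      rw [htdef, hudef]; field_simp; ring
    rw [ht, Real.exp_add, Real.exp_log hXpos]
    have hexp : 1 - u ≤ Real.exp (-u) := by
      have := Real.add_one_le_exp (-u)
      linarith
    nlinarith
  have hu : u < Real.log (Q*n) / (c-1) :=
    (div_lt_div_iff_of_pos_right (by linarith : (0:ℝ) < c - 1)).mpr hlogX
  have hXu : X * u < X * (Real.log (Q*n)/(c-1)) := mul_lt_mul_of_pos_left hu hXpos
  have heq : X * (Real.log (Q*n)/(c-1)) = Q*c/(2*(c-1)) := by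
    rw [hX]; field_simp; ring
  have hfin : Q*c/(2*(c-1)) ≤ Q := by
    rw [div_le_iff₀ (by linarith)]; nlinarith
  have hid : X*(1-u) = X - X*u := by ring
  linarith
end

section
/- Let n ≥ 2, Q > 1 and ρ > 1 satisfy ρ^{n-1} - ρ^{n-2} = Q. Then ρ^{n-1} ≥ Qn/(2·log(Qn)). -/
theorem rho_pow_ge (n : ℕ) (hn : 2 ≤ n) (Q : ℝ) (hQ : 1 < Q) (ρ : ℝ) (hρ : 1 < ρ)
    (heq : ρ ^ (n - 1) - ρ ^ (n - 2) = Q) :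
    ρ ^ (n - 1) ≥ Q * n / (2 * Real.log (Q * n)) := by
  obtain ⟨m, rfl⟩ : ∃ m, n = m + 2 := ⟨n - 2, by omega⟩
  have h1 : m + 2 - 1 = m + 1 := by omega
  have h2 : m + 2 - 2 = m := by omega
  rw [h1, h2] at heq
  rw [h1]
  set N : ℝ := ((m + 2 : ℕ) : ℝ) with hNdef
  have hN : (2:ℝ) ≤ N := by
    rw [hNdef]; push_cast
    have : (0:ℝ) ≤ m := Nat.cast_nonneg m
    linarith
  have hQN : 2 < Q * N := by nlinarith
  have hlog2 : (0.6931471803 : ℝ) < Real.log 2 := Real.log_two_gt_d9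
  have hL2 : Real.log 2 ≤ Real.log (Q * N) := Real.log_le_log (by norm_num) hQN.le
  set L : ℝ := Real.log (Q * N) with hLdef
  have hLpos : 0 < L := by linarith
  set X : ℝ := Q * N / (2 * L) with hXdef
  have hXpos : 0 < X := by
    apply div_pos (by nlinarith) (by linarith)
  have hρpow : (1:ℝ) < ρ ^ (m+1) := one_lt_pow₀ hρ (by omega)
  rcases le_or_gt X 1 with hX1 | hX1
  · linarith
  have hlog2L : 0 ≤ Real.log (2 * L) := Real.log_nonneg (by nlinarith)
  have hlogX : Real.log X = L - Real.log (2 * L) := by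
    rw [hXdef, Real.log_div (by nlinarith) (by positivity)]
  have hlogXnn : 0 < Real.log X := Real.log_pos hX1
  set y : ℝ := X ^ (((m:ℝ) + 1))⁻¹ with hydef
  have hy1 : 1 < y := by
    rw [hydef]
    apply Real.one_lt_rpow_iff_of_pos hXpos |>.mpr
    left
    exact ⟨hX1, by positivity⟩
  have hy0 : 0 < y := by linarith
  have hyX : y ^ (m + 1) = X := by
    rw [hydef, ← Real.rpow_natCast (X ^ (((m:ℝ) + 1))⁻¹) (m+1), ← Real.rpow_mul hXpos.le]
    push_cast
    rw [inv_mul_cancel₀ (by positivity), Real.rpow_one]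
  have hinv : y⁻¹ = Real.exp (-(Real.log X * ((m:ℝ) + 1)⁻¹)) := by
    rw [hydef, Real.rpow_def_of_pos hXpos, ← Real.exp_neg]
  have h1my : 1 - y⁻¹ ≤ Real.log X * ((m:ℝ) + 1)⁻¹ := by
    have := Real.add_one_le_exp (-(Real.log X * ((m:ℝ) + 1)⁻¹))
    rw [hinv]
    linarith
  have hdiff : y ^ (m+1) - y ^ m = y ^ (m+1) * (1 - y⁻¹) := by
    have : y ^ (m+1) * y⁻¹ = y ^ m := by
      rw [pow_succ, mul_assoc, mul_inv_cancel₀ (ne_of_gt hy0), mul_one]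
    ring_nf
    ring_nf at this
    linarith
  have hbound : y ^ (m+1) - y ^ m ≤ X * (Real.log X * ((m:ℝ) + 1)⁻¹) := by
    rw [hdiff, hyX]
    exact mul_le_mul_of_nonneg_left h1my hXpos.le
  have hkey : X * (Real.log X * ((m:ℝ) + 1)⁻¹) ≤ Q := by
    have hm1 : (0:ℝ) < (m:ℝ) + 1 := by positivity
    have hNle : N ≤ 2 * ((m:ℝ) + 1) := by
      rw [hNdef]; push_cast; linarith
    have hlogXL : Real.log X ≤ L := by rw [hlogX]; linarith
    have h1 : N * Real.log X ≤ 2 * ((m:ℝ) + 1) * L := by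
      calc N * Real.log X ≤ 2 * ((m:ℝ) + 1) * Real.log X :=
            mul_le_mul_of_nonneg_right hNle hlogXnn.le
        _ ≤ 2 * ((m:ℝ) + 1) * L := by
            apply mul_le_mul_of_nonneg_left hlogXL (by positivity)
    have hXe : X * (Real.log X * ((m:ℝ) + 1)⁻¹)
        = Q * (N * Real.log X) / (2 * L * ((m:ℝ) + 1)) := by
      rw [hXdef]; field_simp
    rw [hXe, div_le_iff₀ (by positivity)]
    calc Q * (N * Real.log X) ≤ Q * (2 * ((m:ℝ) + 1) * L) :=
          mul_le_mul_of_nonneg_left h1 (by linarith)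
      _ = Q * (2 * L * ((m:ℝ) + 1)) := by ring
  -- so y^(m+1) - y^m ≤ Q
  have hfy : y ^ (m+1) - y ^ m ≤ Q := le_trans hbound hkey
  by_contra hcon
  push_neg at hcon
  have hXρ : ρ ^ (m+1) < X := hcon
  have hρy : ρ < y := by
    by_contra hyρ
    push_neg at hyρ
    have := pow_le_pow_left₀ hy0.le hyρ (m+1)
    rw [hyX] at this
    linarith
  have hmono : ρ ^ m * (ρ - 1) < y ^ m * (y - 1) :=
    mul_lt_mul' (pow_le_pow_left₀ (by linarith) hρy.le m) (by linarith) (by linarith)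
      (pow_pos hy0 m)
  have e1 : ρ ^ (m+1) - ρ ^ m = ρ ^ m * (ρ - 1) := by rw [pow_succ]; ring
  have e2 : y ^ (m+1) - y ^ m = y ^ m * (y - 1) := by rw [pow_succ]; ring
  linarith [heq, hfy, hmono, e1.symm ▸ heq]
end

section
/- Let n ≥ 2, Q > 1 and ρ > 1 with ρ^{n-1} ≥ Qn/(2·log(Qn)). Then n - (n-1)/ρ ≥ min{(n+1)/2, 1 + (1/2)·log(Qn/(2·log(Qn)))}. -/
theorem h_lower_bound (n : ℕ) (hn : 2 ≤ n) (Q : ℝ) (hQ : 1 < Q) (ρ : ℝ) (hρ : 1 < ρ)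
    (hpow : ρ ^ (n - 1) ≥ Q * n / (2 * Real.log (Q * n))) :
    (n : ℝ) - ((n : ℝ) - 1) / ρ ≥
      min (((n : ℝ) + 1) / 2)
        (1 + (1 / 2) * Real.log (Q * n / (2 * Real.log (Q * n)))) := by
  have h2 : (2:ℝ) ≤ (n:ℝ) := by exact_mod_cast hn
  have ha : (1:ℝ) ≤ (n:ℝ) - 1 := by linarith
  set a : ℝ := (n:ℝ) - 1 with ha_def
  have hQn : (1:ℝ) < Q * n := by nlinarith
  have hL : 0 < Real.log (Q * n) := Real.log_pos hQn
  set X : ℝ := Q * n / (2 * Real.log (Q * n)) with hX_def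
  have hXpos : 0 < X := by
    apply div_pos (by linarith) (by linarith)
  set b : ℝ := Real.log X with hb_def
  have hρ0 : (0:ℝ) < ρ := by linarith
  rcases le_or_gt b 0 with hb0 | hb0
  · have h1 : a / ρ ≤ a := by
      rw [div_le_iff₀ hρ0]; nlinarith
    have h2' : min (((n:ℝ)+1)/2) (1 + (1/2)*b) ≤ 1 + (1/2)*b := min_le_right _ _
    have : (n:ℝ) - a / ρ ≥ 1 := by linarith
    linarith
  · -- main case
    have hlog : b ≤ a * Real.log ρ := by
      have h := Real.log_le_log hXpos hpow
      rw [Real.log_pow] at h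
      have hcast : ((n-1:ℕ):ℝ) = a := by
        have h1 : (1:ℕ) ≤ n := by omega
        push_cast [Nat.cast_sub h1]
        ring
      rw [hcast] at h
      exact h
    have ha0 : (0:ℝ) < a := by linarith
    have hs : 0 < a + b := by linarith
    have hρge : (a + b) / a ≤ ρ := by
      have h1 : b / a ≤ Real.log ρ := by
        rw [div_le_iff₀ ha0]; linarith [hlog]
      have h2' : Real.exp (b / a) ≤ ρ := by
        calc Real.exp (b / a) ≤ Real.exp (Real.log ρ) := Real.exp_le_exp.2 h1
          _ = ρ := Real.exp_log hρ0
      have h3 : 1 + b / a ≤ Real.exp (b / a) := by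
        linarith [Real.add_one_le_exp (b / a)]
      have : (a + b) / a = 1 + b / a := by field_simp
      linarith
    have hsa : 0 < (a + b) / a := by positivity
    have hinv : a / ρ ≤ a * a / (a + b) := by
      have h1 : 1 / ρ ≤ a / (a + b) := by
        rw [div_le_div_iff₀ hρ0 hs]
        rw [div_le_iff₀ ha0] at hρge
        nlinarith
      calc a / ρ = a * (1 / ρ) := by ring
        _ ≤ a * (a / (a + b)) := by nlinarith
        _ = a * a / (a + b) := by ring
    have hkey : (n:ℝ) - a / ρ ≥ 1 + a * b / (a + b) := by
      have : a * a / (a + b) + a * b / (a + b) = a := by field_simp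
      linarith
    rcases le_total a b with hab | hab
    · have hmin : a * b / (a + b) ≥ a / 2 := by
        rw [ge_iff_le, div_le_div_iff₀ (by norm_num) hs]
        nlinarith
      have : min (((n:ℝ)+1)/2) (1 + (1/2)*b) ≤ ((n:ℝ)+1)/2 := min_le_left _ _
      have hn1 : ((n:ℝ)+1)/2 = 1 + a / 2 := by rw [ha_def]; ring
      linarith
    · have hmin : a * b / (a + b) ≥ b / 2 := by
        rw [ge_iff_le, div_le_div_iff₀ (by norm_num) hs]
        nlinarith
      have : min (((n:ℝ)+1)/2) (1 + (1/2)*b) ≤ 1 + (1/2)*b := min_le_right _ _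
      linarith
end

section
/- Let q_1,…,q_n be pairwise distinct reals in (0,1]. Define the n×n matrix Q by Q_{i,j} = q_i · ∑_{S ⊆ [n]\{i}, |S| = j-1} (∏_{k∈S} q_k)(∏_{k∉S, k≠i} (1-q_k)) for i,j ∈ [n]. Then Q is invertible. -/
/-!
Row `i` of `M` is the coefficient vector of `P_i(x) = q_i ∏_{k ≠ i} (q_k x + 1 - q_k)`, whose
factor indexed by `k` vanishes exactly at `r_k = 1 - 1/q_k`. Since the `q_k` are distinct, `P_i`
vanishes at `r_j` for every `j ≠ i` but not at `r_i`; so `M` times the Vandermonde matrix of the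
`r_j` is diagonal with nonzero diagonal, and `M` is invertible.
-/

open Finset Matrix

theorem Finset.prod_mul_add_eq_sum_fin_pow {ι R : Type*} [DecidableEq ι] [CommSemiring R]
    (s : Finset ι) (a b : ι → R) (x : R) {n : ℕ} (hs : #s < n) :
    ∏ k ∈ s, (a k * x + b k) =
      ∑ l : Fin n, (∑ S ∈ s.powerset.filter (fun S => #S = l),
        (∏ k ∈ S, a k) * ∏ k ∈ s \ S, b k) * x ^ (l : ℕ) := by
  have hcard : ∀ S ∈ s.powerset, #S ∈ range n := fun S hS =>
    mem_range.2 ((card_le_card (mem_powerset.1 hS)).trans_lt hs)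
  rw [prod_add, Fin.sum_univ_eq_sum_range (fun l => (∑ S ∈ s.powerset.filter (fun S => #S = l),
    (∏ k ∈ S, a k) * ∏ k ∈ s \ S, b k) * x ^ l), ← sum_fiberwise_of_maps_to hcard]
  refine sum_congr rfl fun l _ => ?_
  rw [sum_mul]
  refine sum_congr rfl fun S hS => ?_
  rw [← (mem_filter.1 hS).2, prod_mul_distrib, prod_const]
  ring

theorem Matrix.isUnit_of_sum_mul_pow_eq_zero {n : ℕ} {R : Type*} [CommRing R]
    (M : Matrix (Fin n) (Fin n) R) (r : Fin n → R)
    (hoff : ∀ i j, i ≠ j → ∑ l, M i l * r j ^ (l : ℕ) = 0)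
    (hdiag : ∀ i, IsUnit (∑ l, M i l * r i ^ (l : ℕ))) :
    IsUnit M := by
  have hMV : M * (vandermonde r)ᵀ = diagonal fun i => ∑ l, M i l * r i ^ (l : ℕ) := by
    ext i j
    rw [mul_apply]
    simp only [transpose_apply, vandermonde_apply]
    rcases eq_or_ne i j with rfl | hij
    · rw [diagonal_apply_eq]
    · rw [diagonal_apply_ne _ hij, hoff i j hij]
  have hdet : IsUnit (M.det * (vandermonde r)ᵀ.det) := by
    rw [← det_mul, hMV, det_diagonal]
    exact IsUnit.prod_univ_iff.2 hdiag
  exact (isUnit_iff_isUnit_det M).2 (isUnit_of_mul_isUnit_left hdet)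

theorem mul_one_sub_inv_add_one_sub {K : Type*} [Field K] (a : K) {b : K} (hb : b ≠ 0) :
    a * (1 - b⁻¹) + (1 - a) = (b - a) / b := by
  field_simp
  ring

theorem Q_matrix_invertible (n : ℕ) (q : Fin n → ℝ)
    (hq : ∀ i, 0 < q i ∧ q i ≤ 1) (hinj : Function.Injective q)
    (M : Matrix (Fin n) (Fin n) ℝ)
    (hM : ∀ i j, M i j = q i *
      ∑ S ∈ (Finset.univ.erase i).powerset.filter (fun S => S.card = (j : ℕ)),
        (∏ k ∈ S, q k) * ∏ k ∈ (Finset.univ.erase i) \ S, (1 - q k)) :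
    IsUnit M := by
  have hq0 : ∀ i, q i ≠ 0 := fun i => (hq i).1.ne'
  have hrow : ∀ i x, ∑ l, M i l * x ^ (l : ℕ) =
      q i * ∏ k ∈ univ.erase i, (q k * x + (1 - q k)) := by
    intro i x
    rw [prod_mul_add_eq_sum_fin_pow _ _ _ _
      ((card_erase_lt_of_mem (mem_univ i)).trans_eq (card_fin n)), mul_sum]
    simp only [hM, mul_assoc]
  have heval : ∀ i j, q i * ∏ k ∈ univ.erase i, (q k * (1 - (q j)⁻¹) + (1 - q k)) =
      q i * ∏ k ∈ univ.erase i, (q j - q k) / q j := by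
    intro i j
    simp only [mul_one_sub_inv_add_one_sub _ (hq0 j)]
  refine isUnit_of_sum_mul_pow_eq_zero M (fun j => 1 - (q j)⁻¹) (fun i j hij => ?_) fun i => ?_
  · rw [hrow, heval, prod_eq_zero (mem_erase.2 ⟨hij.symm, mem_univ j⟩) (by simp), mul_zero]
  · rw [hrow, heval, isUnit_iff_ne_zero]
    refine mul_ne_zero (hq0 i) (prod_ne_zero_iff.2 fun k hk => ?_)
    exact div_ne_zero (sub_ne_zero.2 (hinj.ne (mem_erase.1 hk).1).symm) (hq0 i)
end

section
/- Let s_1 ≥ s_2 ≥ … ≥ s_n be reals with s_1 ≥ 0, and let k* ∈ argmax_{k ∈ [n]} k·s_k. Then ∑_{i=1}^n max(s_i, 0) ≤ (k*·s_{k*}) · ∑_{i=1}^n 1/i. In particular the sum of positive parts is at most H_n times the maximum of k·s_k. -/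
/-! If `k * s k ≤ M` for every `k`, then each positive part satisfies `max (s k) 0 ≤ M / k`
(using `M ≥ 1 * s 1 ≥ 0` for the nonpositive terms), and summing over `k` gives `M * H_n`. -/

lemma max_zero_le_div_of_mul_le {x c M : ℝ} (hc : 0 < c) (hM : 0 ≤ M) (h : c * x ≤ M) :
    max x 0 ≤ M / c :=
  max_le ((le_div_iff₀ hc).2 (by linarith)) (div_nonneg hM hc.le)

lemma Finset.sum_max_zero_le_mul_sum_inv {ι : Type*} (t : Finset ι) {s c : ι → ℝ} {M : ℝ}
    (hc : ∀ i ∈ t, 0 < c i) (hM : 0 ≤ M) (h : ∀ i ∈ t, c i * s i ≤ M) :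
    ∑ i ∈ t, max (s i) 0 ≤ M * ∑ i ∈ t, 1 / c i := by
  rw [Finset.mul_sum]
  refine Finset.sum_le_sum fun i hi => ?_
  rw [mul_one_div]
  exact max_zero_le_div_of_mul_le (hc i hi) hM (h i hi)

theorem sum_pos_part_le_harmonic_general (n : ℕ) (hn : 1 ≤ n) (s : ℕ → ℝ)
    (hs1 : 0 ≤ s 1)
    (kstar : ℕ)
    (hmax : ∀ k ∈ Finset.Icc 1 n, (k : ℝ) * s k ≤ (kstar : ℝ) * s kstar) :
    ∑ i ∈ Finset.Icc 1 n, max (s i) 0 ≤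
      ((kstar : ℝ) * s kstar) * ∑ i ∈ Finset.Icc 1 n, (1 : ℝ) / i := by
  have hM : 0 ≤ (kstar : ℝ) * s kstar :=
    hs1.trans (by simpa using hmax 1 (Finset.mem_Icc.2 ⟨le_rfl, hn⟩))
  refine Finset.sum_max_zero_le_mul_sum_inv _ (fun i hi => ?_) hM hmax
  exact Nat.cast_pos.2 (Finset.mem_Icc.1 hi).1

theorem sum_pos_part_le_harmonic (n : ℕ) (hn : 1 ≤ n) (s : ℕ → ℝ)
    (hsorted : ∀ i j, 1 ≤ i → i ≤ j → j ≤ n → s j ≤ s i) (hs1 : 0 ≤ s 1)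
    (kstar : ℕ) (hk : kstar ∈ Finset.Icc 1 n)
    (hmax : ∀ k ∈ Finset.Icc 1 n, (k : ℝ) * s k ≤ (kstar : ℝ) * s kstar) :
    ∑ i ∈ Finset.Icc 1 n, max (s i) 0 ≤
      ((kstar : ℝ) * s kstar) * ∑ i ∈ Finset.Icc 1 n, (1 : ℝ) / i :=
  sum_pos_part_le_harmonic_general n hn s hs1 kstar hmax
end

section
/- Let q ∈ (0,1), c ∈ [0,q), and for each i ∈ [n] set c_i = (1 - 1/i)·q + c/i. Then ∑_{i=1}^{n}(q - c_i) = (q - c)·H_n, where H_n is the n-th harmonic number; and for every k ∈ [n], (1 - c_k/q)·k·q = q - c. Consequently max_{k∈[n]} (1 - c_k/q)·∑_{i≤k} q = q - c, while the social welfare ∑_i (q - c_i) equals H_n·(q - c). -/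
/-! The cost `c_i = (1 - 1/i) q + c/i` interpolates between `c` and `q` so that the margin
`q - c_i = (q - c)/i` decays harmonically. Summing margins gives `(q - c) H_n`, while the
uniform contract for the top `k` agents earns `(q - c_k)/q · k q = k (q - c_k) = q - c`
for every `k`. -/

section Interpolation

variable {K : Type*} [Field K]

theorem sub_harmonic_interpolation (q c : K) {i : K} (hi : i ≠ 0) :
    q - ((1 - 1 / i) * q + c / i) = (q - c) / i := by
  field_simp
  ring

theorem one_sub_harmonic_interpolation_div_mul {q : K} (c : K) {i : K} (hq : q ≠ 0)
    (hi : i ≠ 0) : (1 - ((1 - 1 / i) * q + c / i) / q) * (i * q) = q - c := by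
  rw [one_sub_div hq, sub_harmonic_interpolation q c hi]
  field_simp

end Interpolation

theorem equal_prob_gap_general (n : ℕ) (hn : 1 ≤ n) (q c : ℝ)
    (hq : 0 < q)
    (cs : ℕ → ℝ) (hcs : ∀ i, cs i = (1 - 1 / (i : ℝ)) * q + c / i) :
    (∑ i ∈ Finset.Icc 1 n, (q - cs i)) = (q - c) * ∑ i ∈ Finset.Icc 1 n, (1 : ℝ) / i ∧
    (∀ k ∈ Finset.Icc 1 n, (1 - cs k / q) * ((k : ℝ) * q) = q - c) ∧
    ((Finset.Icc 1 n).sup' (Finset.nonempty_Icc.mpr hn)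
        (fun k => (1 - cs k / q) * ((k : ℝ) * q)) = q - c) := by
  have cast_ne_zero {i : ℕ} (hi : i ∈ Finset.Icc 1 n) : (i : ℝ) ≠ 0 :=
    Nat.cast_ne_zero.mpr (Nat.one_le_iff_ne_zero.mp (Finset.mem_Icc.mp hi).1)
  have revenue (k : ℕ) (hk : k ∈ Finset.Icc 1 n) : (1 - cs k / q) * ((k : ℝ) * q) = q - c := by
    rw [hcs k]
    exact one_sub_harmonic_interpolation_div_mul c hq.ne' (cast_ne_zero hk)
  refine ⟨?_, revenue, ?_⟩
  · rw [Finset.mul_sum]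
    refine Finset.sum_congr rfl fun i hi => ?_
    rw [hcs i, sub_harmonic_interpolation q c (cast_ne_zero hi), mul_one_div]
  · rw [Finset.sup'_congr _ rfl revenue, Finset.sup'_const]

theorem equal_prob_gap (n : ℕ) (hn : 1 ≤ n) (q c : ℝ)
    (hq : 0 < q) (hq1 : q < 1) (hc : 0 ≤ c) (hcq : c < q)
    (cs : ℕ → ℝ) (hcs : ∀ i, cs i = (1 - 1 / (i : ℝ)) * q + c / i) :
    (∑ i ∈ Finset.Icc 1 n, (q - cs i)) = (q - c) * ∑ i ∈ Finset.Icc 1 n, (1 : ℝ) / i ∧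
    (∀ k ∈ Finset.Icc 1 n, (1 - cs k / q) * ((k : ℝ) * q) = q - c) ∧
    ((Finset.Icc 1 n).sup' (Finset.nonempty_Icc.mpr hn)
        (fun k => (1 - cs k / q) * ((k : ℝ) * q)) = q - c) :=
  equal_prob_gap_general n hn q c hq cs hcs
end

section
/- Let c > 0, and set q_i = c·(1 + 1/i) for i ∈ [n]. Then ∑_{i=1}^n (q_i - c) = c·H_n, and for every k ∈ [n], (1 - c/q_k)·∑_{i≤k} q_i = c·(k + H_k)/(k+1) ≤ 2c. Hence (∑_i (q_i - c)) / (max_k (1 - c/q_k)·∑_{i≤k} q_i) ≥ H_n / 2, where H_m = ∑_{i=1}^m 1/i. -/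
/-!
Since `q i - c = c / i` and `1 - c / q k = 1 / (k + 1)`, every quantity is a harmonic sum.
The prefix values `c (k + H k) / (k + 1)` equal `c` at `k = 1` and are at most `2c` because
`H k ≤ k`, so their maximum lies in `[c, 2c]` while the numerator is `c H n`.
-/

open Finset

theorem sum_Icc_one_div_le (m : ℕ) : ∑ i ∈ Icc 1 m, (1 : ℝ) / i ≤ m := by
  calc ∑ i ∈ Icc 1 m, (1 : ℝ) / i ≤ ∑ _i ∈ Icc 1 m, (1 : ℝ) :=
        sum_le_sum fun i hi =>
          div_le_one_of_le₀ (by exact_mod_cast (mem_Icc.mp hi).1) (Nat.cast_nonneg i)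
    _ = m := by simp

namespace EqualCostGap

variable {c : ℝ} {q H : ℕ → ℝ}

theorem sum_sub_eq (hq : ∀ i, q i = c * (1 + 1 / (i : ℝ)))
    (hH : ∀ m, H m = ∑ i ∈ Icc 1 m, (1 : ℝ) / i) (m : ℕ) :
    ∑ i ∈ Icc 1 m, (q i - c) = c * H m := by
  simp only [hq, hH, mul_sum]
  exact sum_congr rfl fun i _ => by ring

theorem sum_eq (hq : ∀ i, q i = c * (1 + 1 / (i : ℝ)))
    (hH : ∀ m, H m = ∑ i ∈ Icc 1 m, (1 : ℝ) / i) (m : ℕ) :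
    ∑ i ∈ Icc 1 m, q i = c * (m + H m) := by
  have hsplit : ∑ i ∈ Icc 1 m, q i = ∑ i ∈ Icc 1 m, (q i - c) + ∑ _i ∈ Icc 1 m, c := by
    rw [← sum_add_distrib]; simp
  rw [hsplit, sum_sub_eq hq hH, sum_const, Nat.card_Icc, nsmul_eq_mul]
  push_cast
  ring

theorem one_sub_div_eq (hq : ∀ i, q i = c * (1 + 1 / (i : ℝ))) (hc : c ≠ 0)
    {k : ℕ} (hk : k ≠ 0) : 1 - c / q k = 1 / (k + 1) := by
  have hk' : (k : ℝ) ≠ 0 := Nat.cast_ne_zero.mpr hk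
  rw [hq]
  field_simp
  ring

theorem prefix_value_eq (hq : ∀ i, q i = c * (1 + 1 / (i : ℝ)))
    (hH : ∀ m, H m = ∑ i ∈ Icc 1 m, (1 : ℝ) / i)
    (hc : c ≠ 0) {k : ℕ} (hk : k ≠ 0) :
    (1 - c / q k) * ∑ i ∈ Icc 1 k, q i = c * (k + H k) / (k + 1) := by
  rw [one_sub_div_eq hq hc hk, sum_eq hq hH]
  ring

theorem prefix_value_le (hq : ∀ i, q i = c * (1 + 1 / (i : ℝ)))
    (hH : ∀ m, H m = ∑ i ∈ Icc 1 m, (1 : ℝ) / i)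
    (hc : 0 < c) {k : ℕ} (hk : k ≠ 0) :
    (1 - c / q k) * ∑ i ∈ Icc 1 k, q i ≤ 2 * c := by
  have hHk : H k ≤ k := hH k ▸ sum_Icc_one_div_le k
  rw [prefix_value_eq hq hH hc.ne' hk, div_le_iff₀ (by positivity)]
  nlinarith

theorem prefix_value_one (hq : ∀ i, q i = c * (1 + 1 / (i : ℝ)))
    (hH : ∀ m, H m = ∑ i ∈ Icc 1 m, (1 : ℝ) / i)
    (hc : c ≠ 0) : (1 - c / q 1) * ∑ i ∈ Icc 1 1, q i = c := by
  rw [prefix_value_eq hq hH hc one_ne_zero, hH]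
  norm_num

end EqualCostGap

open EqualCostGap in
theorem equal_cost_gap (n : ℕ) (hn : 1 ≤ n) (c : ℝ) (hc : 0 < c)
    (q : ℕ → ℝ) (hq : ∀ i, q i = c * (1 + 1 / (i : ℝ)))
    (H : ℕ → ℝ) (hH : ∀ m, H m = ∑ i ∈ Finset.Icc 1 m, (1 : ℝ) / i) :
    (∑ i ∈ Finset.Icc 1 n, (q i - c)) = c * H n ∧
    (∀ k ∈ Finset.Icc 1 n,
      (1 - c / q k) * (∑ i ∈ Finset.Icc 1 k, q i) = c * ((k : ℝ) + H k) / ((k : ℝ) + 1) ∧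
      (1 - c / q k) * (∑ i ∈ Finset.Icc 1 k, q i) ≤ 2 * c) ∧
    (∑ i ∈ Finset.Icc 1 n, (q i - c)) /
        ((Finset.Icc 1 n).sup' (Finset.nonempty_Icc.mpr hn)
          (fun k => (1 - c / q k) * (∑ i ∈ Finset.Icc 1 k, q i))) ≥ H n / 2 := by
  have hk0 : ∀ k ∈ Icc 1 n, k ≠ 0 := fun k hk => Nat.one_le_iff_ne_zero.mp (mem_Icc.mp hk).1
  refine ⟨sum_sub_eq hq hH n, fun k hk =>
    ⟨prefix_value_eq hq hH hc.ne' (hk0 k hk), prefix_value_le hq hH hc (hk0 k hk)⟩, ?_⟩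
  set M := (Icc 1 n).sup' (nonempty_Icc.mpr hn) fun k => (1 - c / q k) * ∑ i ∈ Icc 1 k, q i
  have hcM : c ≤ M := prefix_value_one hq hH hc.ne' ▸
    le_sup' (fun k => (1 - c / q k) * ∑ i ∈ Icc 1 k, q i) (mem_Icc.mpr ⟨le_rfl, hn⟩)
  have hM : M ≤ 2 * c := sup'_le _ _ fun k hk => prefix_value_le hq hH hc (hk0 k hk)
  have hHn : 0 ≤ H n := hH n ▸ by positivity
  calc H n / 2 = c * H n / (2 * c) := by field_simp
    _ ≤ c * H n / M := div_le_div_of_nonneg_left (by positivity) (by linarith) hM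
    _ = _ := by rw [sum_sub_eq hq hH]
end

section
/- Let n ≥ 1 and let q_1,…,q_n, c_1,…,c_n be nonnegative reals with q_i > 0, sorted so that c_i/q_i is nondecreasing in i. Let UA = max_{k ∈ [n]} (1 - c_k/q_k)·∑_{i=1}^{k} q_i. Then for every subset S ⊆ [n], ∑_{ℓ∈S}(q_ℓ - c_ℓ) ≤ UA · ∑_{ℓ∈S} q_ℓ / (∑_{i=1}^{ℓ} q_i). -/
/-! Writing `Q ℓ = ∑_{i ≤ ℓ} q i`, each summand factors as
`q ℓ - c ℓ = ((1 - c ℓ / q ℓ) * Q ℓ) * (q ℓ / Q ℓ)`, and the first factor is one of the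
candidates whose maximum is `UA`. -/

theorem Finset.sum_mul_le_sup'_mul_sum {ι : Type*} {s t : Finset ι} (ht : t.Nonempty)
    (hst : s ⊆ t) (g w : ι → ℝ) (hw : ∀ i ∈ s, 0 ≤ w i) :
    ∑ i ∈ s, g i * w i ≤ t.sup' ht g * ∑ i ∈ s, w i := by
  rw [Finset.mul_sum]
  exact Finset.sum_le_sum fun i hi =>
    mul_le_mul_of_nonneg_right (Finset.le_sup' g (hst hi)) (hw i hi)

theorem sub_eq_one_sub_div_mul_mul_div {q c Q : ℝ} (hq : q ≠ 0) (hQ : Q ≠ 0) :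
    q - c = (1 - c / q) * Q * (q / Q) := by
  field_simp

theorem sum_Icc_one_pos {n ℓ : ℕ} {q : ℕ → ℝ} (hq : ∀ i ∈ Finset.Icc 1 n, 0 < q i)
    (hℓ : ℓ ∈ Finset.Icc 1 n) : 0 < ∑ i ∈ Finset.Icc 1 ℓ, q i := by
  obtain ⟨h1, hℓn⟩ := Finset.mem_Icc.mp hℓ
  exact Finset.sum_pos (fun i hi => hq i (Finset.Icc_subset_Icc_right hℓn hi))
    (Finset.nonempty_Icc.mpr h1)

theorem welfare_le_UA_times_sum_q_general (n : ℕ) (hn : 1 ≤ n) (q c : ℕ → ℝ)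
    (hq : ∀ i ∈ Finset.Icc 1 n, 0 < q i ∧ q i ≤ 1)
    (UA : ℝ)
    (hUA : UA = (Finset.Icc 1 n).sup' (Finset.nonempty_Icc.mpr hn)
      (fun k => (1 - c k / q k) * ∑ i ∈ Finset.Icc 1 k, q i)) :
    ∀ S ⊆ Finset.Icc 1 n,
      ∑ ℓ ∈ S, (q ℓ - c ℓ) ≤ UA * ∑ ℓ ∈ S, q ℓ / (∑ i ∈ Finset.Icc 1 ℓ, q i) := by
  intro S hS
  have hpos : ∀ i ∈ Finset.Icc 1 n, 0 < q i := fun i hi => (hq i hi).1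
  have hfactor : ∑ ℓ ∈ S, (q ℓ - c ℓ) = ∑ ℓ ∈ S,
      (1 - c ℓ / q ℓ) * (∑ i ∈ Finset.Icc 1 ℓ, q i) * (q ℓ / ∑ i ∈ Finset.Icc 1 ℓ, q i) :=
    Finset.sum_congr rfl fun ℓ hℓ => sub_eq_one_sub_div_mul_mul_div (hpos ℓ (hS hℓ)).ne'
      (sum_Icc_one_pos hpos (hS hℓ)).ne'
  rw [hfactor, hUA]
  exact Finset.sum_mul_le_sup'_mul_sum _ hS _ _ fun ℓ hℓ =>
    div_nonneg (hpos ℓ (hS hℓ)).le (sum_Icc_one_pos hpos (hS hℓ)).le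

theorem welfare_le_UA_times_sum_q (n : ℕ) (hn : 1 ≤ n) (q c : ℕ → ℝ)
    (hq : ∀ i ∈ Finset.Icc 1 n, 0 < q i ∧ q i ≤ 1)
    (hc : ∀ i ∈ Finset.Icc 1 n, 0 ≤ c i ∧ c i ≤ q i)
    (hsorted : ∀ i ∈ Finset.Icc 1 n, ∀ j ∈ Finset.Icc 1 n, i ≤ j → c i / q i ≤ c j / q j)
    (UA : ℝ)
    (hUA : UA = (Finset.Icc 1 n).sup' (Finset.nonempty_Icc.mpr hn)
      (fun k => (1 - c k / q k) * ∑ i ∈ Finset.Icc 1 k, q i)) :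
    ∀ S ⊆ Finset.Icc 1 n,
      ∑ ℓ ∈ S, (q ℓ - c ℓ) ≤ UA * ∑ ℓ ∈ S, q ℓ / (∑ i ∈ Finset.Icc 1 ℓ, q i) :=
  welfare_le_UA_times_sum_q_general n hn q c hq UA hUA
end

section
/- Let n ≥ 1 and q_1,…,q_n, c_1,…,c_n be reals with c_i > 0, 0 < c_i ≤ q_i, sorted so that c_i/q_i is nondecreasing. Let UA = max_{k∈[n]} (1 - c_k/q_k)·∑_{i≤k} q_i. Then for every S ⊆ [n], ∑_{ℓ∈S}(q_ℓ - c_ℓ) ≤ UA · ∑_{ℓ∈S} c_ℓ / (∑_{i=1}^{ℓ} c_i). (Proof: with t maximizing (q_t/c_t - 1)·∑_{i≤t} c_i, one has (q_ℓ/c_ℓ - 1) ≤ (q_t/c_t - 1)·(∑_{i≤t}c_i)/(∑_{i≤ℓ}c_i), and (q_t/c_t - 1)·∑_{i≤t}c_i ≤ (1 - c_t/q_t)·∑_{i≤t}q_i ≤ UA, using ∑_{i≤t}c_i/∑_{i≤t}q_i ≤ c_t/q_t.) -/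
/-!
Each term is bounded separately. Because `c i / q i` is nondecreasing, the prefix sums satisfy
`C ℓ ≤ (c ℓ / q ℓ) * Q ℓ` (`C`, `Q` the sums of `c`, `q` over `[1, ℓ]`). Hence
`q ℓ - c ℓ = (1 - c ℓ / q ℓ) * q ℓ ≤ (1 - c ℓ / q ℓ) * Q ℓ * (c ℓ / C ℓ)`,
and `(1 - c ℓ / q ℓ) * Q ℓ` is one of the values whose maximum is `UA`.
-/

open Finset

theorem Finset.sum_le_mul_sum_of_div_le {ι : Type*} {s : Finset ι} {c q : ι → ℝ} {r : ℝ}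
    (hq : ∀ i ∈ s, 0 < q i) (h : ∀ i ∈ s, c i / q i ≤ r) :
    ∑ i ∈ s, c i ≤ r * ∑ i ∈ s, q i := by
  rw [mul_sum]
  exact sum_le_sum fun i hi => (div_le_iff₀ (hq i hi)).mp (h i hi)

theorem sub_le_one_sub_div_mul_mul_div {c q C Q : ℝ} (hc : 0 < c) (hcq : c ≤ q) (hC : 0 < C)
    (hCQ : C ≤ c / q * Q) :
    q - c ≤ (1 - c / q) * Q * (c / C) := by
  have hq : 0 < q := hc.trans_le hcq
  have hq_le : q ≤ Q * (c / C) := by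
    rw [mul_div_assoc', le_div_iff₀ hC]
    rw [div_mul_eq_mul_div, le_div_iff₀ hq] at hCQ
    linarith
  calc q - c = (1 - c / q) * q := by field_simp
    _ ≤ (1 - c / q) * (Q * (c / C)) :=
        mul_le_mul_of_nonneg_left hq_le (sub_nonneg.mpr ((div_le_one hq).mpr hcq))
    _ = (1 - c / q) * Q * (c / C) := by ring

theorem welfare_le_UA_times_sum_c_general (n : ℕ) (hn : 1 ≤ n) (q c : ℕ → ℝ)
    (hc : ∀ i ∈ Finset.Icc 1 n, 0 < c i ∧ c i ≤ q i)
    (hsorted : ∀ i ∈ Finset.Icc 1 n, ∀ j ∈ Finset.Icc 1 n, i ≤ j → c i / q i ≤ c j / q j)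
    (UA : ℝ)
    (hUA : UA = (Finset.Icc 1 n).sup' (Finset.nonempty_Icc.mpr hn)
      (fun k => (1 - c k / q k) * ∑ i ∈ Finset.Icc 1 k, q i)) :
    ∀ S ⊆ Finset.Icc 1 n,
      ∑ ℓ ∈ S, (q ℓ - c ℓ) ≤ UA * ∑ ℓ ∈ S, c ℓ / (∑ i ∈ Finset.Icc 1 ℓ, c i) := by
  intro S hS
  rw [mul_sum]
  refine sum_le_sum fun ℓ hℓS => ?_
  have hℓ := hS hℓS
  have hprefix : Icc 1 ℓ ⊆ Icc 1 n := Icc_subset_Icc_right (mem_Icc.mp hℓ).2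
  have hC : 0 < ∑ i ∈ Icc 1 ℓ, c i :=
    sum_pos (fun i hi => (hc i (hprefix hi)).1) (nonempty_Icc.mpr (mem_Icc.mp hℓ).1)
  have hCQ : ∑ i ∈ Icc 1 ℓ, c i ≤ c ℓ / q ℓ * ∑ i ∈ Icc 1 ℓ, q i :=
    sum_le_mul_sum_of_div_le
      (fun i hi => (hc i (hprefix hi)).1.trans_le (hc i (hprefix hi)).2)
      (fun i hi => hsorted i (hprefix hi) ℓ hℓ (mem_Icc.mp hi).2)
  have hUA_ge : (1 - c ℓ / q ℓ) * ∑ i ∈ Icc 1 ℓ, q i ≤ UA :=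
    hUA ▸ le_sup' (fun k => (1 - c k / q k) * ∑ i ∈ Icc 1 k, q i) hℓ
  calc q ℓ - c ℓ ≤ (1 - c ℓ / q ℓ) * (∑ i ∈ Icc 1 ℓ, q i) * (c ℓ / ∑ i ∈ Icc 1 ℓ, c i) :=
        sub_le_one_sub_div_mul_mul_div (hc ℓ hℓ).1 (hc ℓ hℓ).2 hC hCQ
    _ ≤ UA * (c ℓ / ∑ i ∈ Icc 1 ℓ, c i) :=
        mul_le_mul_of_nonneg_right hUA_ge (div_nonneg (hc ℓ hℓ).1.le hC.le)

theorem welfare_le_UA_times_sum_c (n : ℕ) (hn : 1 ≤ n) (q c : ℕ → ℝ)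
    (hq : ∀ i ∈ Finset.Icc 1 n, q i ≤ 1)
    (hc : ∀ i ∈ Finset.Icc 1 n, 0 < c i ∧ c i ≤ q i)
    (hsorted : ∀ i ∈ Finset.Icc 1 n, ∀ j ∈ Finset.Icc 1 n, i ≤ j → c i / q i ≤ c j / q j)
    (UA : ℝ)
    (hUA : UA = (Finset.Icc 1 n).sup' (Finset.nonempty_Icc.mpr hn)
      (fun k => (1 - c k / q k) * ∑ i ∈ Finset.Icc 1 k, q i)) :
    ∀ S ⊆ Finset.Icc 1 n,
      ∑ ℓ ∈ S, (q ℓ - c ℓ) ≤ UA * ∑ ℓ ∈ S, c ℓ / (∑ i ∈ Finset.Icc 1 ℓ, c i) :=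
  welfare_le_UA_times_sum_c_general n hn q c hc hsorted UA hUA
end
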